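/- Let i : A → B be a continuous map of profinite spaces and let M be a profinite abelian group. Assume that for every finite abelian group F (with the discrete topology) the restriction map C(B,F) → C(A,F), g ↦ g ∘ i, is surjective. Then the restriction map C(B,M) → C(A,M), g ↦ g ∘ i, is surjective. -/

import Mathlib

/-!
By Zorn's lemma choose a minimal closed `Z ⊆ B × M` containing the graph of `f` along `i` whose
fibres are cosets of one subgroup `N`, i.e. a continuous lift `B → M ⧸ N` of `f`. Given an open
subgroup `U`, such a lift refines to one modulo `N ⊓ U`: since `M ⧸ (N ⊔ U)` is finite there is
a locally constant refinement, and its discrepancy with `f` on `A` is a continuous map to the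
finite group `(N ⊔ U) ⧸ U`, which extends to `B` by hypothesis and corrects the refinement.
Minimality forces `N ≤ U` for every open `U`, so `N = ⊥` and `Z` is the graph of an extension.
-/

universe u

open Set

theorem continuous_of_isClosed_relation {X M Y : Type*} [TopologicalSpace X] [TopologicalSpace M]
    [CompactSpace M] [TopologicalSpace Y] {Z : Set (X × M)} (hZ : IsClosed Z)
    (hne : ∀ x, ∃ m, (x, m) ∈ Z) {φ : X → Y} {κ : M → Y} (hκ : Continuous κ)
    (hφ : ∀ x m, (x, m) ∈ Z → κ m = φ x) : Continuous φ := by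
  refine continuous_iff_isClosed.2 fun C hC => ?_
  have hpre : φ ⁻¹' C = Prod.fst '' (Z ∩ Prod.snd ⁻¹' (κ ⁻¹' C)) := by
    ext x
    constructor
    · intro hx
      obtain ⟨m, hm⟩ := hne x
      exact ⟨(x, m), ⟨hm, by simpa [mem_preimage, hφ x m hm] using hx⟩, rfl⟩
    · rintro ⟨⟨x, m⟩, ⟨hm, hmC⟩, rfl⟩
      simpa [mem_preimage, hφ x m hm] using hmC
  rw [hpre]
  exact isClosedMap_fst_of_compactSpace _ (hZ.inter (hC.preimage (hκ.comp continuous_snd)))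

theorem eq_zero_of_forall_mem_openAddSubgroup {G : Type*} [AddGroup G] [TopologicalSpace G]
    [IsTopologicalAddGroup G] [CompactSpace G] [TotallyDisconnectedSpace G] {x : G}
    (hx : ∀ U : OpenAddSubgroup G, x ∈ U) : x = 0 := by
  by_contra hx0
  obtain ⟨H, hH⟩ := ProfiniteGrp.exist_openNormalAddSubgroup_sub_open_nhds_of_zero
    (isOpen_compl_singleton (x := x)) (Ne.symm hx0)
  exact hH (hx H.toOpenAddSubgroup) rfl

variable {B : Type*} {M : Type u} [TopologicalSpace B] [AddCommGroup M] [TopologicalSpace M]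

/-- `Z` is the preimage in `B × M` of the graph of a continuous map `B → M ⧸ N`. -/
structure IsCosetSection (N : AddSubgroup M) (Z : Set (B × M)) : Prop where
  isClosed : IsClosed Z
  exists_mem : ∀ b, ∃ m, (b, m) ∈ Z
  mem_iff_sub_mem : ∀ {b m m'}, (b, m) ∈ Z → ((b, m') ∈ Z ↔ m' - m ∈ N)

namespace IsCosetSection

variable {N : AddSubgroup M} {Z : Set (B × M)}

theorem top_univ : IsCosetSection (⊤ : AddSubgroup M) (univ : Set (B × M)) :=
  ⟨isClosed_univ, fun _ => ⟨0, trivial⟩, fun _ => by simp⟩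

theorem exists_sInter [CompactSpace M] {c : Set (Set (B × M))} (hc : IsChain (· ⊆ ·) c)
    (hne : c.Nonempty) (h : ∀ Z ∈ c, ∃ N, IsCosetSection N Z) :
    ∃ N, IsCosetSection N (⋂₀ c) := by
  choose N hN using h
  have : Nonempty c := hne.to_subtype
  refine ⟨⨅ Z : c, N Z Z.2, isClosed_sInter fun Z hZ => (hN Z hZ).isClosed, fun b => ?_,
    fun {b m m'} hm => ?_⟩
  · have hclosed : ∀ Z : c, IsClosed (Prod.mk b ⁻¹' (Z : Set (B × M))) := fun Z =>
      (hN Z Z.2).isClosed.preimage (Continuous.prodMk_right b)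
    have hdir : Directed (· ⊇ ·) fun Z : c => Prod.mk b ⁻¹' (Z : Set (B × M)) := by
      intro Z₁ Z₂
      rcases hc.total Z₁.2 Z₂.2 with h | h
      · exact ⟨Z₁, subset_rfl, preimage_mono h⟩
      · exact ⟨Z₂, preimage_mono h, subset_rfl⟩
    obtain ⟨m, hm⟩ := IsCompact.nonempty_iInter_of_directed_nonempty_isCompact_isClosed _ hdir
      (fun Z => (hN Z Z.2).exists_mem b) (fun Z => (hclosed Z).isCompact) hclosed
    exact ⟨m, mem_sInter.2 fun Z hZ => mem_iInter.1 hm ⟨Z, hZ⟩⟩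
  · simp only [mem_sInter] at hm ⊢
    rw [AddSubgroup.mem_iInf]
    exact ⟨fun hm' Z => ((hN Z Z.2).mem_iff_sub_mem (hm Z Z.2)).1 (hm' Z Z.2),
      fun hsub Z hZ => ((hN Z hZ).mem_iff_sub_mem (hm Z hZ)).2 (hsub ⟨Z, hZ⟩)⟩

theorem inter_sub_mem [ContinuousSub M] (hZ : IsCosetSection N Z) {U : AddSubgroup M}
    (hU : IsClosed (U : Set M)) {w : B → M} (hw : Continuous w)
    (hwZ : ∀ b, ∃ m, (b, m) ∈ Z ∧ m - w b ∈ U) :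
    IsCosetSection (N ⊓ U) (Z ∩ {p | p.2 - w p.1 ∈ U}) where
  isClosed := hZ.isClosed.inter (hU.preimage (by fun_prop))
  exists_mem := hwZ
  mem_iff_sub_mem := by
    rintro b m m' ⟨hm, hmU⟩
    rw [mem_inter_iff, AddSubgroup.mem_inf, ← hZ.mem_iff_sub_mem hm]
    refine and_congr_right fun _ => ⟨fun h => ?_, fun h => ?_⟩
    · simpa only [sub_sub_sub_cancel_right] using U.sub_mem h hmU
    · show m' - w b ∈ U
      exact sub_add_sub_cancel m' m (w b) ▸ U.add_mem h hmU

theorem exists_continuousMap_sub_mem [IsTopologicalAddGroup M] [CompactSpace M]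
    (hZ : IsCosetSection N Z) (U : OpenAddSubgroup M) :
    ∃ w : C(B, M), ∀ b, ∃ m, (b, m) ∈ Z ∧ m - w b ∈ U := by
  have : DiscreteTopology (M ⧸ (N ⊔ U)) :=
    QuotientAddGroup.discreteTopology (AddSubgroup.isOpen_mono le_sup_right U.isOpen)
  choose z hz using hZ.exists_mem
  -- the class of `z b` modulo `N ⊔ U` does not depend on the choice of `z b`
  have hzc : Continuous fun b => (z b : M ⧸ (N ⊔ U)) :=
    continuous_of_isClosed_relation hZ.isClosed hZ.exists_mem continuous_quot_mk fun b m hm =>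
      QuotientAddGroup.eq_iff_sub_mem.2
        (le_sup_left (α := AddSubgroup M) ((hZ.mem_iff_sub_mem (hz b)).1 hm))
  refine ⟨⟨fun b => Quotient.out (z b : M ⧸ (N ⊔ U)),
    (continuous_of_discreteTopology (f := Quotient.out)).comp hzc⟩, fun b => ?_⟩
  obtain ⟨v, hv⟩ := QuotientAddGroup.mk_out_eq_add (N ⊔ U) (z b)
  obtain ⟨n, hn, u, hu, hnu⟩ := AddSubgroup.mem_sup.1 v.2
  refine ⟨z b + n, (hZ.mem_iff_sub_mem (hz b)).2 (by simpa using hn), ?_⟩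
  simp only [ContinuousMap.coe_mk, hv, ← hnu]
  simpa [← add_assoc] using U.neg_mem hu

theorem exists_continuousMap_sub_mem_of_surjective [IsTopologicalAddGroup M] [CompactSpace M]
    {A : Type*} [TopologicalSpace A] {i : C(A, B)}
    (h : ∀ (F : Type u) [AddCommGroup F] [Fintype F] [TopologicalSpace F] [DiscreteTopology F],
      Function.Surjective (fun g : C(B, F) => g.comp i))
    (hZ : IsCosetSection N Z) {f : C(A, M)} (hf : ∀ a, (i a, f a) ∈ Z) (U : OpenAddSubgroup M) :
    ∃ w : C(B, M), (∀ b, ∃ m, (b, m) ∈ Z ∧ m - w b ∈ U) ∧ ∀ a, f a - w (i a) ∈ U := by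
  obtain ⟨w₀, hw₀⟩ := hZ.exists_continuousMap_sub_mem U
  -- the obstruction to `w₀` lifting `f` modulo `U` lies in the finite group `F`
  let F := N.map (QuotientAddGroup.mk' U.toAddSubgroup)
  let : Fintype F := Fintype.ofFinite F
  have hδ : ∀ a, (QuotientAddGroup.mk (f a - w₀ (i a)) : M ⧸ U.toAddSubgroup) ∈ F := by
    intro a
    obtain ⟨m, hm, hmU⟩ := hw₀ (i a)
    refine ⟨f a - m, (hZ.mem_iff_sub_mem hm).1 (hf a), QuotientAddGroup.eq_iff_sub_mem.2 ?_⟩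
    simpa only [sub_sub_sub_cancel_left, neg_sub] using U.neg_mem hmU
  obtain ⟨e, he⟩ := h F ⟨fun a => ⟨_, hδ a⟩, by fun_prop⟩
  refine ⟨w₀ + ⟨fun b => Quotient.out (e b : M ⧸ U.toAddSubgroup),
    (continuous_of_discreteTopology (f := fun q : M ⧸ U.toAddSubgroup => q.out)).comp
      (by fun_prop)⟩,
    fun b => ?_, fun a => ?_⟩
  · obtain ⟨m, hm, hmU⟩ := hw₀ b
    obtain ⟨n, hn, hnb⟩ := (e b).2
    refine ⟨m + n, (hZ.mem_iff_sub_mem hm).2 (by simpa using hn), ?_⟩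
    have hnU : n - Quotient.out (e b : M ⧸ U.toAddSubgroup) ∈ U :=
      QuotientAddGroup.eq_iff_sub_mem.1 (hnb.trans (QuotientAddGroup.out_eq' _).symm)
    simpa only [ContinuousMap.add_apply, ContinuousMap.coe_mk, add_sub_add_comm]
      using add_mem hmU hnU
  · have hea : (e (i a) : M ⧸ U.toAddSubgroup) = QuotientAddGroup.mk (f a - w₀ (i a)) :=
      congrArg Subtype.val (DFunLike.congr_fun he a)
    have : _ ∈ U := QuotientAddGroup.eq_iff_sub_mem.1 ((QuotientAddGroup.out_eq' _).trans hea).symm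
    simpa only [ContinuousMap.add_apply, ContinuousMap.coe_mk, sub_sub] using this

theorem exists_subset_inf [IsTopologicalAddGroup M] [CompactSpace M]
    {A : Type*} [TopologicalSpace A] {i : C(A, B)}
    (h : ∀ (F : Type u) [AddCommGroup F] [Fintype F] [TopologicalSpace F] [DiscreteTopology F],
      Function.Surjective (fun g : C(B, F) => g.comp i))
    (hZ : IsCosetSection N Z) {f : C(A, M)} (hf : ∀ a, (i a, f a) ∈ Z) (U : OpenAddSubgroup M) :
    ∃ Z' ⊆ Z, IsCosetSection (N ⊓ U) Z' ∧ ∀ a, (i a, f a) ∈ Z' := by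
  obtain ⟨w, hwZ, hwf⟩ := hZ.exists_continuousMap_sub_mem_of_surjective h hf U
  exact ⟨_, inter_subset_left, hZ.inter_sub_mem U.isClosed w.continuous hwZ,
    fun a => ⟨hf a, hwf a⟩⟩

theorem bot_of_forall_openAddSubgroup [IsTopologicalAddGroup M] [CompactSpace M]
    [TotallyDisconnectedSpace M] (hZ : ∀ U : OpenAddSubgroup M, IsCosetSection (N ⊓ U) Z) :
    IsCosetSection ⊥ Z where
  isClosed := (hZ ⊤).isClosed
  exists_mem := (hZ ⊤).exists_mem
  mem_iff_sub_mem {b m m'} hm := by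
    refine ⟨fun hm' => eq_zero_of_forall_mem_openAddSubgroup fun U => ?_, fun h0 => ?_⟩
    · exact (((hZ U).mem_iff_sub_mem hm).1 hm').2
    · rwa [sub_eq_zero.1 (AddSubgroup.mem_bot.1 h0)]

theorem exists_continuousMap [CompactSpace M] (hZ : IsCosetSection ⊥ Z) :
    ∃ g : C(B, M), ∀ b m, (b, m) ∈ Z → m = g b := by
  choose g hg using hZ.exists_mem
  have hZg : ∀ b m, (b, m) ∈ Z → m = g b := fun b m hm =>
    sub_eq_zero.1 ((hZ.mem_iff_sub_mem (hg b)).1 hm)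
  exact ⟨⟨g, continuous_of_isClosed_relation hZ.isClosed hZ.exists_mem continuous_id hZg⟩, hZg⟩

end IsCosetSection

theorem surjective_comp_profinite_abelian_coefficients
    (A B : Profinite.{u}) (i : C(A, B))
    (M : Type u) [AddCommGroup M] [TopologicalSpace M] [IsTopologicalAddGroup M]
    [CompactSpace M] [TotallyDisconnectedSpace M]
    (h : ∀ (F : Type u) [AddCommGroup F] [Fintype F] [TopologicalSpace F] [DiscreteTopology F],
      Function.Surjective (fun g : C(B, F) => g.comp i)) :
    Function.Surjective (fun g : C(B, M) => g.comp i) := by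
  intro f
  let S : Set (Set (B × M)) := {Z | (∃ N, IsCosetSection N Z) ∧ ∀ a, (i a, f a) ∈ Z}
  obtain ⟨Z, -, hZmin⟩ := zorn_superset_nonempty S
    (fun c hcS hc hne => ⟨⋂₀ c, ⟨IsCosetSection.exists_sInter hc hne fun Z hZ => (hcS hZ).1,
      fun a => mem_sInter.2 fun Z hZ => (hcS hZ).2 a⟩, fun _ => sInter_subset_of_mem⟩)
    univ ⟨⟨⊤, IsCosetSection.top_univ⟩, fun _ => trivial⟩
  obtain ⟨⟨N, hZ⟩, hf⟩ := hZmin.prop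
  have hinf : ∀ U : OpenAddSubgroup M, IsCosetSection (N ⊓ U) Z := fun U => by
    obtain ⟨Z', hZ'Z, hZ', hfZ'⟩ := hZ.exists_subset_inf h hf U
    rwa [hZmin.eq_of_subset ⟨⟨_, hZ'⟩, hfZ'⟩ hZ'Z] at hZ'
  obtain ⟨g, hg⟩ := (IsCosetSection.bot_of_forall_openAddSubgroup hinf).exists_continuousMap
  exact ⟨g, ContinuousMap.ext fun a => (hg _ _ (hf a)).symm⟩
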